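/- With round weight limit w_b = 2 and constant parameters k_i = k_2, n_i = n_2 for i ≥ 2, if w_{i+1} = w_i, then |B_{i+1}(w_i−t)| = |B_i(w_i−t)|/2^{n_2} < |B_i(w_i−t)|, where t is such that |B_i(j)| > 0 for j ≥ w_i − t and |B_i(j)| = 0 for j < w_i − t. -/
import Mathlib


/-- With round weight limit `w_b = 2` and constant parameters, if the weight limit is
unchanged then the expected ball size at the smallest nonzero radius `m = w_i − t`
shrinks by a factor `2^{n_2}`: `|B_{i+1}(m)| = |B_i(m)|/2^{n_2} < |B_i(m)|`. -/
theorem stmt12 (k2 n2 : ℕ) (hk2 : 1 ≤ k2) (hn2 : 1 ≤ n2)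
    (B : ℕ → ℤ → ℝ) (i : ℕ) (m : ℤ)
    (hzero : ∀ j : ℤ, j < m → B i j = 0)
    (hpos : 0 < B i m)
    (hevol : ∀ j : ℤ, B (i + 1) j =
      (B i j + (k2 + n2 : ℝ) * B i (j - 1)
        + (Nat.choose (k2 + n2) 2 : ℝ) * B i (j - 2)) / 2 ^ n2) :
    B (i + 1) m = B i m / 2 ^ n2 ∧ B (i + 1) m < B i m := by
  have h1 : B i (m - 1) = 0 := hzero _ (by omega)
  have h2 : B i (m - 2) = 0 := hzero _ (by omega)
  have heq : B (i + 1) m = B i m / 2 ^ n2 := by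
    rw [hevol m, h1, h2]; ring
  refine ⟨heq, ?_⟩
  rw [heq]
  have h2n : (2:ℝ) ≤ 2 ^ n2 := by
    calc (2:ℝ) = 2 ^ 1 := (pow_one 2).symm
    _ ≤ 2 ^ n2 := pow_le_pow_right₀ (by norm_num) hn2
  calc B i m / 2 ^ n2 ≤ B i m / 2 := by
        apply div_le_div_of_nonneg_left hpos.le (by norm_num) h2n
    _ < B i m := by linarith
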